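/- Let G be a finite connected C4-free Helly graph with radius r, let u and w be mutually far apart vertices (i.e., e(u) = e(w) = dist(u,w)) such that dist(u,w) = diam(G) − 1 = 2r − 2, and let C = L(u, r−1, w). Then a pair of vertices (x,y) is a diametral pair of G if and only if dist(x,C) = dist(y,C) = r − 1 and Pr(x,C) ∩ Pr(y,C) = ∅. -/

import Mathlib

open SimpleGraph

variable {V : Type*}

/-- The ball of radius `r` centered at `v`. -/
def gBall (G : SimpleGraph V) (v : V) (r : ℕ) : Set V := {u | G.dist v u ≤ r}

/-- A graph is Helly if every (nonempty) family of pairwise intersecting balls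
has a nonempty common intersection. -/
def IsHelly (G : SimpleGraph V) : Prop :=
  ∀ F : Set (V × ℕ), F.Nonempty →
    (∀ p ∈ F, ∀ q ∈ F, (gBall G p.1 p.2 ∩ gBall G q.1 q.2).Nonempty) →
    (⋂ p ∈ F, gBall G p.1 p.2).Nonempty

/-- The eccentricity of a vertex. -/
noncomputable def ecc (G : SimpleGraph V) [Fintype V] (v : V) : ℕ :=
  Finset.univ.sup (fun u => G.dist v u)

/-- The radius of a graph. -/
noncomputable def grad (G : SimpleGraph V) [Fintype V] : ℕ :=
  sInf (Set.range (ecc G))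

/-- The diameter of a graph. -/
noncomputable def gdiam (G : SimpleGraph V) [Fintype V] : ℕ :=
  Finset.univ.sup (ecc G)

/-- The center of a graph: vertices of minimum eccentricity. -/
noncomputable def gcenter (G : SimpleGraph V) [Fintype V] : Set V :=
  {v | ecc G v = grad G}

/-- Distance from a vertex to a set of vertices. -/
noncomputable def distS (G : SimpleGraph V) (v : V) (S : Set V) : ℕ :=
  sInf (G.dist v '' S)

/-- The metric projection of a vertex onto a set of vertices. -/
noncomputable def proj (G : SimpleGraph V) (v : V) (S : Set V) : Set V :=
  {s ∈ S | G.dist v s = distS G v S}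

/-- The slice `L(u,k,v)`: vertices on the metric interval from `u` to `v`
at distance `k` from `u`. -/
def gslice (G : SimpleGraph V) (u : V) (k : ℕ) (v : V) : Set V :=
  {w | G.dist u w = k ∧ G.dist u w + G.dist w v = G.dist u v}

/-- A graph is `C₄`-free if it has no induced cycle on four vertices. -/
def C4Free (G : SimpleGraph V) : Prop :=
  ¬ ∃ a b c d : V, a ≠ b ∧ a ≠ c ∧ a ≠ d ∧ b ≠ c ∧ b ≠ d ∧ c ≠ d ∧
    G.Adj a b ∧ G.Adj b c ∧ G.Adj c d ∧ G.Adj d a ∧ ¬ G.Adj a c ∧ ¬ G.Adj b d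

/-- The open neighbourhood of a set: vertices outside it with a neighbour in it. -/
def nbhdSet (G : SimpleGraph V) (C : Set V) : Set V :=
  {v | v ∉ C ∧ ∃ c ∈ C, G.Adj v c}

/-
Write `k = rad(G) - 1`, so `dist(u,w) = 2k`, `diam(G) = 2k + 1` and `e(u) = e(w) = 2k`. By the
Helly property any two vertices `x, y` with `dist(x,y) ≤ 2k` have a common vertex of `C` within
distance `k`: the four balls of radius `k` around `x, y, u, w` pairwise meet. In a `C₄`-free Helly
graph every slice is a clique, so each vertex of `C` has eccentricity at most `k + 1`. Hence a
diametral pair stays at distance at least `k` from `C`, and a common projection would bring it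
within distance `2k`; conversely a non-diametral pair has a common projection by the first
remark.
-/

section

variable {G : SimpleGraph V}

lemma SimpleGraph.Connected.exists_dist_le_dist_le (hconn : G.Connected) {a b : V} {s t : ℕ}
    (h : G.dist a b ≤ s + t) : ∃ z, G.dist a z ≤ s ∧ G.dist z b ≤ t := by
  obtain ⟨p, hp⟩ := hconn.exists_walk_length_eq_dist a b
  refine ⟨p.getVert s, (dist_le (p.take s)).trans ?_, (dist_le (p.drop s)).trans ?_⟩
  · rw [Walk.take_length]
    exact min_le_left _ _
  · rw [Walk.drop_length]
    omega

lemma SimpleGraph.Connected.adj_of_dist_le_one (hconn : G.Connected) {a b : V}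
    (h : G.dist a b ≤ 1) (hne : a ≠ b) : G.Adj a b := by
  have := hconn.pos_dist_of_ne hne
  rw [← dist_eq_one_iff_adj]
  omega

lemma IsHelly.exists_forall_dist_le (hH : IsHelly G) (hconn : G.Connected) {ι : Type*}
    [Nonempty ι] (c : ι → V) (r : ι → ℕ) (h : ∀ i j, G.dist (c i) (c j) ≤ r i + r j) :
    ∃ z, ∀ i, G.dist (c i) z ≤ r i := by
  obtain ⟨z, hz⟩ := hH (Set.range fun i => (c i, r i)) (Set.range_nonempty _) (by
    rintro _ ⟨i, rfl⟩ _ ⟨j, rfl⟩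
    obtain ⟨z, hi, hj⟩ := hconn.exists_dist_le_dist_le (h i j)
    exact ⟨z, hi, by rwa [dist_comm] at hj⟩)
  exact ⟨z, fun i => Set.mem_iInter₂.mp hz _ ⟨i, rfl⟩⟩

lemma IsHelly.exists_dist_le₃ (hH : IsHelly G) (hconn : G.Connected) {a b c : V} {s t p : ℕ}
    (hab : G.dist a b ≤ s + t) (hac : G.dist a c ≤ s + p) (hbc : G.dist b c ≤ t + p) :
    ∃ z, G.dist a z ≤ s ∧ G.dist b z ≤ t ∧ G.dist c z ≤ p := by
  obtain ⟨z, hz⟩ := hH.exists_forall_dist_le hconn ![a, b, c] ![s, t, p] (by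
    intro i j
    fin_cases i <;> fin_cases j <;> simp <;> first | omega | rw [dist_comm]; omega)
  exact ⟨z, hz 0, hz 1, hz 2⟩

lemma IsHelly.exists_dist_le₄ (hH : IsHelly G) (hconn : G.Connected) {a b c d : V}
    {s t p q : ℕ} (hab : G.dist a b ≤ s + t) (hac : G.dist a c ≤ s + p)
    (had : G.dist a d ≤ s + q) (hbc : G.dist b c ≤ t + p) (hbd : G.dist b d ≤ t + q)
    (hcd : G.dist c d ≤ p + q) :
    ∃ z, G.dist a z ≤ s ∧ G.dist b z ≤ t ∧ G.dist c z ≤ p ∧ G.dist d z ≤ q := by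
  obtain ⟨z, hz⟩ := hH.exists_forall_dist_le hconn ![a, b, c, d] ![s, t, p, q] (by
    intro i j
    fin_cases i <;> fin_cases j <;> simp <;> first | omega | rw [dist_comm]; omega)
  exact ⟨z, hz 0, hz 1, hz 2, hz 3⟩

lemma C4Free.dist_le_one_of_common_nbrs (hC4 : C4Free G) (hconn : G.Connected) {a b x y : V}
    (hab : 2 ≤ G.dist a b) (hxa : G.dist x a ≤ 1) (hxb : G.dist x b ≤ 1)
    (hya : G.dist y a ≤ 1) (hyb : G.dist y b ≤ 1) : G.dist x y ≤ 1 := by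
  have not_adj : ∀ {p q : V}, 2 ≤ G.dist p q → ¬ G.Adj p q := fun hpq h => by
    rw [← dist_eq_one_iff_adj] at h
    omega
  have ne_of_pos : ∀ {p q : V}, 0 < G.dist p q → p ≠ q := fun hpq =>
    (dist_ne_zero_iff_ne_and_reachable.mp hpq.ne').1
  have hxa' : x ≠ a := by rintro rfl; omega
  have hya' : y ≠ a := by rintro rfl; omega
  have hxb' : x ≠ b := by rintro rfl; rw [dist_comm] at hxa; omega
  have hyb' : y ≠ b := by rintro rfl; rw [dist_comm] at hya; omega
  by_contra! hxy
  exact hC4 ⟨x, a, y, b, hxa', ne_of_pos (by omega), hxb', hya'.symm, ne_of_pos (by omega), hyb',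
    hconn.adj_of_dist_le_one hxa hxa', (hconn.adj_of_dist_le_one hya hya').symm,
    hconn.adj_of_dist_le_one hyb hyb', (hconn.adj_of_dist_le_one hxb hxb').symm,
    not_adj hxy, not_adj hab⟩

lemma IsHelly.exists_dist_le_one_dist_lt (hH : IsHelly G) (hconn : G.Connected) {c c' v : V}
    (hcc' : 2 ≤ G.dist c c') (hv : G.dist v c = G.dist v c') (hv0 : 0 < G.dist v c') :
    ∃ a, G.dist c' a ≤ 1 ∧ G.dist c a < G.dist c c' ∧ G.dist v a < G.dist v c' := by
  obtain ⟨a, hca, hc'a, hva⟩ := hH.exists_dist_le₃ hconn (a := c) (b := c') (c := v)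
    (s := G.dist c c' - 1) (t := 1) (p := G.dist v c' - 1) (by omega)
    (by rw [dist_comm, hv]; omega) (by rw [dist_comm]; omega)
  exact ⟨a, hc'a, by omega, by omega⟩

lemma IsHelly.dist_le_one_of_mem_gslice (hH : IsHelly G) (hC4 : C4Free G) (hconn : G.Connected)
    {u w c c' : V} {k : ℕ} (hk0 : 0 < k) (hk : k < G.dist u w)
    (hc : c ∈ gslice G u k w) (hc' : c' ∈ gslice G u k w) : G.dist c c' ≤ 1 := by
  obtain ⟨hcu, hcw⟩ := hc
  obtain ⟨hc'u, hc'w⟩ := hc'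
  have hwc : G.dist w c = G.dist u w - k := by rw [dist_comm]; omega
  have hwc' : G.dist w c' = G.dist u w - k := by rw [dist_comm]; omega
  by_contra! hcc'
  -- Neighbours `a`, `b` of `c'` on the `u`- and `w`-side are far apart; their common neighbour `e`
  -- towards `c` closes an induced `C₄` with `c'` unless `c' ~ e`, which brings `c` closer to `c'`.
  obtain ⟨a, hc'a, hca, hua⟩ :=
    hH.exists_dist_le_one_dist_lt hconn hcc' (v := u) (by omega) (by omega)
  obtain ⟨b, hc'b, hcb, hwb⟩ :=
    hH.exists_dist_le_one_dist_lt hconn hcc' (v := w) (by omega) (by omega)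
  have hab : 2 ≤ G.dist a b := by
    have := hconn.dist_triangle (u := u) (v := a) (w := b)
    have := hconn.dist_triangle (u := u) (v := b) (w := w)
    have : G.dist b w = G.dist w b := dist_comm
    omega
  have hab' : G.dist a b ≤ 1 + 1 := by
    have := hconn.dist_triangle (u := a) (v := c') (w := b)
    have : G.dist a c' = G.dist c' a := dist_comm
    omega
  obtain ⟨e, hae, hbe, hce⟩ := hH.exists_dist_le₃ hconn (c := c) (s := 1) (t := 1)
    (p := G.dist c c' - 2) hab' (by rw [dist_comm]; omega) (by rw [dist_comm]; omega)
  have hc'e := hC4.dist_le_one_of_common_nbrs hconn hab hc'a hc'b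
    (by rwa [dist_comm]) (by rwa [dist_comm])
  have := hconn.dist_triangle (u := c) (v := e) (w := c')
  have : G.dist e c' = G.dist c' e := dist_comm
  omega

lemma mem_gslice_of_dist_le (hconn : G.Connected) {u w z : V} {s t : ℕ}
    (huw : G.dist u w = s + t) (hs : G.dist u z ≤ s) (ht : G.dist z w ≤ t) :
    z ∈ gslice G u s w := by
  have := hconn.dist_triangle (u := u) (v := z) (w := w)
  exact ⟨by omega, by omega⟩

lemma distS_le_dist {v c : V} {S : Set V} (hc : c ∈ S) : distS G v S ≤ G.dist v c :=
  Nat.sInf_le ⟨c, hc, rfl⟩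

lemma distS_eq_of_forall_le {v c : V} {S : Set V} {n : ℕ} (hc : c ∈ S) (hvc : G.dist v c ≤ n)
    (h : ∀ c' ∈ S, n ≤ G.dist v c') : distS G v S = n :=
  le_antisymm ((distS_le_dist hc).trans hvc)
    (le_csInf ⟨_, c, hc, rfl⟩ (by rintro _ ⟨c', hc', rfl⟩; exact h c' hc'))

lemma mem_proj_of_dist_le {v c : V} {S : Set V} (hc : c ∈ S) (h : G.dist v c ≤ distS G v S) :
    c ∈ proj G v S :=
  ⟨hc, le_antisymm h (distS_le_dist hc)⟩

section MidSlice

variable {u w : V} {k : ℕ}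

lemma IsHelly.exists_mem_gslice_dist_le_dist_le (hH : IsHelly G) (hconn : G.Connected)
    (huw : G.dist u w = 2 * k) (hu : ∀ v, G.dist u v ≤ 2 * k) (hw : ∀ v, G.dist w v ≤ 2 * k)
    {x y : V} (hxy : G.dist x y ≤ 2 * k) :
    ∃ c ∈ gslice G u k w, G.dist x c ≤ k ∧ G.dist y c ≤ k := by
  obtain ⟨c, hxc, hyc, huc, hwc⟩ := hH.exists_dist_le₄ hconn (a := x) (b := y) (c := u) (d := w)
    (s := k) (t := k) (p := k) (q := k) (by omega) (by rw [dist_comm]; linarith [hu x])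
    (by rw [dist_comm]; linarith [hw x]) (by rw [dist_comm]; linarith [hu y])
    (by rw [dist_comm]; linarith [hw y]) (by omega)
  refine ⟨c, mem_gslice_of_dist_le hconn (t := k) (by omega) huc ?_, hxc, hyc⟩
  rwa [SimpleGraph.dist_comm]

lemma IsHelly.dist_le_succ_of_mem_gslice (hH : IsHelly G) (hC4 : C4Free G) (hconn : G.Connected)
    (huw : G.dist u w = 2 * k) (hu : ∀ v, G.dist u v ≤ 2 * k) (hw : ∀ v, G.dist w v ≤ 2 * k)
    (hk : 0 < k) {c : V} (hc : c ∈ gslice G u k w) (v : V) : G.dist c v ≤ k + 1 := by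
  obtain ⟨c', hc', hvc', -⟩ := hH.exists_mem_gslice_dist_le_dist_le hconn huw hu hw
    (x := v) (y := v) (by simp)
  have := hH.dist_le_one_of_mem_gslice hC4 hconn hk (by omega) hc hc'
  have := hconn.dist_triangle (u := c) (v := c') (w := v)
  have : G.dist c' v = G.dist v c' := dist_comm
  omega

lemma IsHelly.distS_gslice_eq_of_dist_eq (hH : IsHelly G) (hC4 : C4Free G)
    (hconn : G.Connected) (huw : G.dist u w = 2 * k) (hu : ∀ v, G.dist u v ≤ 2 * k)
    (hw : ∀ v, G.dist w v ≤ 2 * k) (hk : 0 < k) {x y : V} (hxy : G.dist x y = 2 * k + 1) :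
    distS G x (gslice G u k w) = k := by
  obtain ⟨c, hc, hxc, -⟩ := hH.exists_mem_gslice_dist_le_dist_le hconn huw hu hw
    (x := x) (y := x) (by simp)
  refine distS_eq_of_forall_le hc hxc fun c' hc' => ?_
  have := hH.dist_le_succ_of_mem_gslice hC4 hconn huw hu hw hk hc' y
  have := hconn.dist_triangle (u := x) (v := c') (w := y)
  omega

lemma IsHelly.dist_eq_iff_distS_gslice (hH : IsHelly G) (hC4 : C4Free G)
    (hconn : G.Connected) (huw : G.dist u w = 2 * k) (hu : ∀ v, G.dist u v ≤ 2 * k)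
    (hw : ∀ v, G.dist w v ≤ 2 * k) (hk : 0 < k) {x y : V} (hxy : G.dist x y ≤ 2 * k + 1) :
    G.dist x y = 2 * k + 1 ↔
      distS G x (gslice G u k w) = k ∧ distS G y (gslice G u k w) = k ∧
        proj G x (gslice G u k w) ∩ proj G y (gslice G u k w) = ∅ := by
  constructor
  · intro hxy
    have hx := hH.distS_gslice_eq_of_dist_eq hC4 hconn huw hu hw hk hxy
    have hy := hH.distS_gslice_eq_of_dist_eq hC4 hconn huw hu hw hk
      (x := y) (y := x) (by rwa [SimpleGraph.dist_comm])
    refine ⟨hx, hy, Set.eq_empty_of_forall_notMem ?_⟩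
    rintro c ⟨⟨-, hxc⟩, ⟨-, hyc⟩⟩
    have := hconn.dist_triangle (u := x) (v := c) (w := y)
    have : G.dist c y = G.dist y c := dist_comm
    omega
  · rintro ⟨hx, hy, hdisj⟩
    by_contra hne
    obtain ⟨c, hc, hxc, hyc⟩ := hH.exists_mem_gslice_dist_le_dist_le hconn huw hu hw
      (x := x) (y := y) (by omega)
    have hcx : c ∈ proj G x (gslice G u k w) := mem_proj_of_dist_le hc (by omega)
    have hcy : c ∈ proj G y (gslice G u k w) := mem_proj_of_dist_le hc (by omega)
    exact (Set.eq_empty_iff_forall_notMem.mp hdisj) c ⟨hcx, hcy⟩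

end MidSlice

section Finite

variable [Fintype V]

lemma dist_le_ecc (v x : V) : G.dist v x ≤ ecc G v :=
  Finset.le_sup (f := fun u => G.dist v u) (Finset.mem_univ x)

lemma ecc_le_gdiam (v : V) : ecc G v ≤ gdiam G :=
  Finset.le_sup (Finset.mem_univ v)

lemma dist_le_gdiam (x y : V) : G.dist x y ≤ gdiam G :=
  (dist_le_ecc x y).trans (ecc_le_gdiam x)

lemma gdiam_le_two_mul_ecc (hconn : G.Connected) (u : V) : gdiam G ≤ 2 * ecc G u :=
  Finset.sup_le fun x _ => Finset.sup_le fun y _ => by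
    have := hconn.dist_triangle (u := x) (v := u) (w := y)
    have : G.dist x u = G.dist u x := dist_comm
    have := dist_le_ecc (G := G) u x
    have := dist_le_ecc (G := G) u y
    omega

end Finite

end

/-- In a finite connected C4-free Helly graph of radius `r`, if `u, w`
are mutually far apart with `dist(u,w) = diam(G) − 1 = 2r − 2` and
`C = L(u, r−1, w)`, then `(x,y)` is a diametral pair iff
`dist(x,C) = dist(y,C) = r − 1` and `Pr(x,C) ∩ Pr(y,C) = ∅`. -/
theorem stmt8 (G : SimpleGraph V) [Fintype V] (hconn : G.Connected) (hH : IsHelly G)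
    (hC4 : C4Free G) (u w : V)
    (hu : ecc G u = G.dist u w) (hw : ecc G w = G.dist u w)
    (hd : G.dist u w + 1 = gdiam G) (hr : G.dist u w + 2 = 2 * grad G) :
    ∀ x y : V, G.dist x y = gdiam G ↔
      (distS G x (gslice G u (grad G - 1) w) = grad G - 1 ∧
       distS G y (gslice G u (grad G - 1) w) = grad G - 1 ∧
       proj G x (gslice G u (grad G - 1) w) ∩ proj G y (gslice G u (grad G - 1) w) = ∅) := by
  have := gdiam_le_two_mul_ecc hconn u
  set k := grad G - 1
  have huw : G.dist u w = 2 * k := by omega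
  have hk : 0 < k := by omega
  have hdiam : gdiam G = 2 * k + 1 := by omega
  intro x y
  rw [hdiam]
  exact hH.dist_eq_iff_distS_gslice hC4 hconn huw
    (fun v => by have := dist_le_ecc (G := G) u v; omega)
    (fun v => by have := dist_le_ecc (G := G) w v; omega) hk (hdiam ▸ dist_le_gdiam x y)
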